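/- arXiv:2512.16220 — 5 statements merged into one kernel-verified Lean document; each statement's English description precedes it below -/
import Mathlib

section
/- Let q1 < q2 be primes and let p be an integer with p ≥ q1²q2². Then there exist positive integers u, v such that p = u·q1 + v·q2, q1 ∤ u, and q2 ∤ v. -/
/-!
Take `u ≡ 1 (mod q1)` and `v ≡ 1 (mod q2)`, i.e. `u = q1 t1 + 1`, `v = q2 t2 + 1`. Then
`p = u q1 + v q2` becomes `p - q1 - q2 = t1 q1² + t2 q2²`, which is solvable in `t1, t2 ≥ 0` because
`p - q1 - q2` exceeds the bound `(q1² - 1)(q2² - 1)` of the two-coin Frobenius problem for the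
coprime pair `q1², q2²`.
-/

lemma Nat.not_dvd_mul_add_one {m : ℕ} (hm : 1 < m) (x : ℕ) : ¬ m ∣ x * m + 1 := fun h =>
  hm.ne' (Nat.dvd_one.mp ((Nat.dvd_add_right (dvd_mul_left m x)).mp h))

lemma Nat.pred_sq_mul_pred_sq_add_le {m n : ℕ} (hm : 1 < m) (hn : 1 < n) :
    (m ^ 2).pred * (n ^ 2).pred + m + n ≤ m ^ 2 * n ^ 2 := by
  have hm2 : m < m ^ 2 := by nlinarith
  have hn2 : n < n ^ 2 := by nlinarith
  obtain ⟨a, ha⟩ : ∃ a, m ^ 2 = a + 1 := ⟨m ^ 2 - 1, by omega⟩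
  obtain ⟨b, hb⟩ : ∃ b, n ^ 2 = b + 1 := ⟨n ^ 2 - 1, by omega⟩
  rw [ha] at hm2 ⊢
  rw [hb] at hn2 ⊢
  simp only [Nat.pred_succ]
  nlinarith

theorem Nat.exists_mul_add_mul_not_dvd {m n p : ℕ} (hmn : m.Coprime n) (hm : 1 < m) (hn : 1 < n)
    (hp : m ^ 2 * n ^ 2 ≤ p) :
    ∃ u v : ℕ, 0 < u ∧ 0 < v ∧ p = u * m + v * n ∧ ¬ m ∣ u ∧ ¬ n ∣ v := by
  have hbound := Nat.pred_sq_mul_pred_sq_add_le hm hn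
  obtain ⟨x, y, hxy⟩ := Nat.exists_add_mul_eq_of_gcd_dvd_of_mul_pred_le (m ^ 2) (n ^ 2) (p - m - n)
    (by simp [(hmn.pow 2 2).gcd_eq_one]) (by omega)
  refine ⟨x * m + 1, y * n + 1, by positivity, by positivity, ?_,
    Nat.not_dvd_mul_add_one hm x, Nat.not_dvd_mul_add_one hn y⟩
  have hx : (x * m + 1) * m = x * m ^ 2 + m := by ring
  have hy : (y * n + 1) * n = y * n ^ 2 + n := by ring
  omega

theorem frobenius_refinement (q1 q2 p : ℕ) (hq1 : q1.Prime) (hq2 : q2.Prime)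
    (hlt : q1 < q2) (hp : q1 ^ 2 * q2 ^ 2 ≤ p) :
    ∃ u v : ℕ, 0 < u ∧ 0 < v ∧ p = u * q1 + v * q2 ∧ ¬ q1 ∣ u ∧ ¬ q2 ∣ v :=
  Nat.exists_mul_add_mul_not_dvd ((Nat.coprime_primes hq1 hq2).mpr hlt.ne) hq1.one_lt hq2.one_lt hp
end

section
/- For a prime p and integer n ≥ p, the number of monic polynomials in 𝔽_p[x] of degree n having no root in 𝔽_p equals (1 − 1/p)^p · p^n, i.e., equals (p−1)^p · p^{n−p}. -/
open Polynomial

/-- The set of monic polynomials of degree `d` over a finite field has `|F|^d` elements. -/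
lemma ncard_monic_aux (F : Type*) [Field F] [Fintype F] (d : ℕ) :
    Set.ncard {q : F[X] | q.Monic ∧ q.natDegree = d} = Fintype.card F ^ d := by
  have e1 : {q : F[X] | q.Monic ∧ q.natDegree = d} ≃ degreeLT F d := by
    refine ⟨fun q => ⟨q.1 - X ^ d, ?_⟩, fun r => ⟨X ^ d + r.1, ?_⟩, ?_, ?_⟩
    · obtain ⟨q, hq1, hq2⟩ := q
      rw [mem_degreeLT]
      calc (q - X ^ d).degree < q.degree := by
            refine degree_sub_lt ?_ hq1.ne_zero ?_
            · rw [degree_X_pow, degree_eq_natDegree hq1.ne_zero, hq2]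
            · rw [hq1.leadingCoeff, leadingCoeff_X_pow]
        _ = d := by rw [degree_eq_natDegree hq1.ne_zero, hq2]
    · obtain ⟨r, hr⟩ := r
      rw [mem_degreeLT] at hr
      have hm : (X ^ d + r).Monic := monic_X_pow_add hr
      refine ⟨hm, ?_⟩
      have : (X ^ d + r).degree = (d : WithBot ℕ) := by
        rw [degree_add_eq_left_of_degree_lt (by rwa [degree_X_pow]), degree_X_pow]
      exact natDegree_eq_of_degree_eq_some this
    · rintro ⟨q, hq⟩; simp [Subtype.ext_iff]
    · rintro ⟨r, hr⟩; simp [Subtype.ext_iff]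
  rw [← Nat.card_coe_set_eq, Nat.card_congr (e1.trans (degreeLTEquiv F d).toEquiv),
    Nat.card_eq_fintype_card]
  simp

theorem count_rootless_monic_polys_large_deg (p n : ℕ) (hp : p.Prime) (hn : p ≤ n) :
    Set.ncard {f : Polynomial (ZMod p) |
        f.Monic ∧ f.natDegree = n ∧ ∀ a : ZMod p, f.eval a ≠ 0} =
      (p - 1) ^ p * p ^ (n - p) := by
  haveI : Fact p.Prime := ⟨hp⟩
  set m : (ZMod p)[X] := X ^ p - X with hm_def
  have hdegX : (X : (ZMod p)[X]).degree < (p : WithBot ℕ) := by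
    rw [degree_X]
    exact_mod_cast hp.one_lt
  have hm : m.Monic := monic_X_pow_sub hdegX
  have hmdeg : m.degree = (p : WithBot ℕ) := by
    rw [hm_def, degree_sub_eq_left_of_degree_lt (by rwa [degree_X_pow]), degree_X_pow]
  have hmnatdeg : m.natDegree = p := natDegree_eq_of_degree_eq_some hmdeg
  have hmeval : ∀ a : ZMod p, m.eval a = 0 := by
    intro a; simp [hm_def, ZMod.pow_card]
  have hcard : (Finset.univ : Finset (ZMod p)).card = p := by
    simp [ZMod.card]
  set S := {f : (ZMod p)[X] | f.Monic ∧ f.natDegree = n ∧ ∀ a : ZMod p, f.eval a ≠ 0}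
  set A := {q : (ZMod p)[X] | q.Monic ∧ q.natDegree = n - p}
  set B := {v : ZMod p → ZMod p | ∀ a, v a ≠ 0}
  set Φ : (ZMod p)[X] → (ZMod p)[X] × (ZMod p → ZMod p) :=
    fun f => (f /ₘ m, fun a => f.eval a) with hΦ
  -- evals of f equal evals of f %ₘ m
  have heval_mod : ∀ (f : (ZMod p)[X]) (a : ZMod p), (f %ₘ m).eval a = f.eval a := by
    intro f a
    conv_rhs => rw [← modByMonic_add_div f m]
    simp [hmeval]
  have hbij : Set.BijOn Φ S (A ×ˢ B) := by
    refine ⟨?_, ?_, ?_⟩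
    · -- MapsTo
      rintro f ⟨hf1, hf2, hf3⟩
      have hdle : m.degree ≤ f.degree := by
        rw [hmdeg, degree_eq_natDegree hf1.ne_zero, hf2]
        exact_mod_cast hn
      constructor
      · refine ⟨?_, ?_⟩
        · unfold Φ
          rw [Monic, leadingCoeff_divByMonic_of_monic hm hdle]
          exact hf1
        · show (f /ₘ m).natDegree = n - p
          rw [natDegree_divByMonic f hm, hf2, hmnatdeg]
      · exact fun a => hf3 a
    · -- InjOn
      rintro f₁ - f₂ - h
      have h1 : f₁ /ₘ m = f₂ /ₘ m := congrArg Prod.fst h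
      have h2 : ∀ a : ZMod p, f₁.eval a = f₂.eval a := fun a =>
        congrFun (congrArg Prod.snd h) a
      have hmod : f₁ %ₘ m = f₂ %ₘ m := by
        refine Polynomial.eq_of_degrees_lt_of_eval_finset_eq (Finset.univ) ?_ ?_ ?_
        · rw [hcard]; exact (degree_modByMonic_lt f₁ hm).trans_le hmdeg.le
        · rw [hcard]; exact (degree_modByMonic_lt f₂ hm).trans_le hmdeg.le
        · intro i _
          rw [heval_mod, heval_mod, h2]
      calc f₁ = f₁ %ₘ m + m * (f₁ /ₘ m) := (modByMonic_add_div f₁ m).symm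
        _ = f₂ %ₘ m + m * (f₂ /ₘ m) := by rw [h1, hmod]
        _ = f₂ := modByMonic_add_div f₂ m
    · -- SurjOn
      rintro ⟨q, v⟩ ⟨⟨hq1, hq2⟩, hv⟩
      set r : (ZMod p)[X] := Lagrange.interpolate Finset.univ id v with hr_def
      have hinj : Set.InjOn (id : ZMod p → ZMod p) (Finset.univ : Finset (ZMod p)) :=
        Function.injective_id.injOn
      have hrdeg : r.degree < (p : WithBot ℕ) := by
        have := Lagrange.degree_interpolate_lt v hinj
        rwa [hcard] at this
      have hreval : ∀ a : ZMod p, r.eval a = v a := fun a =>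
        Lagrange.eval_interpolate_at_node v hinj (Finset.mem_univ a)
      set f : (ZMod p)[X] := r + m * q with hf_def
      have hmq : (m * q).Monic := hm.mul hq1
      have hmqdeg : (m * q).degree = (n : WithBot ℕ) := by
        rw [degree_eq_natDegree hmq.ne_zero, hm.natDegree_mul hq1, hmnatdeg, hq2,
          Nat.add_sub_cancel' hn]
      have hfdiv : f /ₘ m = q ∧ f %ₘ m = r :=
        div_modByMonic_unique q r hm ⟨rfl, by rw [hmdeg]; exact hrdeg⟩
      have hpn : (p : WithBot ℕ) ≤ (n : WithBot ℕ) := by exact_mod_cast hn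
      have hfmonic : f.Monic := hmq.add_of_right (by rw [hmqdeg]; exact hrdeg.trans_le hpn)
      have hfdeg : f.natDegree = n := by
        apply natDegree_eq_of_degree_eq_some
        rw [hf_def, degree_add_eq_right_of_degree_lt, hmqdeg]
        rw [hmqdeg]
        exact hrdeg.trans_le hpn
      have hfeval : ∀ a : ZMod p, f.eval a = v a := by
        intro a; rw [hf_def]; simp [hmeval, hreval a]
      refine ⟨f, ⟨hfmonic, hfdeg, fun a => by rw [hfeval a]; exact hv a⟩, ?_⟩
      show (f /ₘ m, fun a => f.eval a) = (q, v)
      rw [hfdiv.1]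
      exact congrArg _ (funext hfeval)
  have himg : Φ '' S = A ×ˢ B := hbij.image_eq
  have hS : S.ncard = (A ×ˢ B).ncard := by
    rw [← himg, Set.ncard_image_of_injOn hbij.injOn]
  rw [hS]
  -- split the product
  have hprod : (A ×ˢ B).ncard = A.ncard * B.ncard := by
    rw [← Nat.card_coe_set_eq, ← Nat.card_coe_set_eq, ← Nat.card_coe_set_eq,
      Nat.card_congr (Equiv.Set.prod A B), Nat.card_prod]
  rw [hprod]
  have hA : A.ncard = p ^ (n - p) := by
    rw [ncard_monic_aux (ZMod p) (n - p), ZMod.card]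
  have hB : B.ncard = (p - 1) ^ p := by
    have e : B ≃ (ZMod p → {x : ZMod p // x ≠ 0}) :=
      ⟨fun v => fun a => ⟨v.1 a, v.2 a⟩, fun w => ⟨fun a => (w a).1, fun a => (w a).2⟩,
        fun v => rfl, fun w => rfl⟩
    rw [← Nat.card_coe_set_eq, Nat.card_congr e, Nat.card_eq_fintype_card,
      Fintype.card_fun]
    simp [ZMod.card, Fintype.card_subtype_compl, Fintype.card_subtype_eq]
  rw [hA, hB]
  ring
end

section
/- Let p be prime and n ≥ 2, and define C_p(n) = A_p(n)/p^n where A_p(n) = Σ_{k=0}^{n} (−1)^k C(p,k) p^{n−k} is the number of monic degree-n polynomials over 𝔽_p with no root in 𝔽_p. Then (p² − 1)/(3p²) ≤ C_p(n) ≤ (p − 1)/(2p). In particular 1/4 ≤ C_p(n) < 1/2. -/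
open Finset

private def Taux (f : ℕ → ℚ) (n : ℕ) : ℚ := ∑ k ∈ Finset.range (n+1), (-1)^k * f k

private lemma Taux_succ (f : ℕ → ℚ) (n : ℕ) :
    Taux f (n+1) = Taux f n + (-1)^(n+1) * f (n+1) := by
  simp [Taux, Finset.sum_range_succ]

private lemma Taux_odd (f : ℕ → ℚ) (m : ℕ) :
    Taux f (2*m+3) = Taux f (2*m+2) - f (2*m+3) := by
  rw [show 2*m+3 = (2*m+2)+1 from rfl, Taux_succ]
  have h : ((-1:ℚ))^(2*m+2+1) = -1 := Odd.neg_one_pow ⟨m+1, by ring⟩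
  rw [h]; ring

private lemma Taux_even (f : ℕ → ℚ) (m : ℕ) :
    Taux f (2*m+4) = Taux f (2*m+3) + f (2*m+4) := by
  rw [show 2*m+4 = (2*m+3)+1 from rfl, Taux_succ]
  have h : ((-1:ℚ))^(2*m+3+1) = 1 := Even.neg_one_pow ⟨m+2, by ring⟩
  rw [h]; ring

private lemma alt_bounds (f : ℕ → ℚ) (hpos : ∀ k, 0 ≤ f k)
    (hmono : ∀ k, f (k+1) ≤ f k) (n : ℕ) (hn : 2 ≤ n) :
    Taux f 3 ≤ Taux f n ∧ Taux f n ≤ Taux f 2 := by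
  have key : ∀ m, Taux f (2*m+2) ≤ Taux f 2 ∧ Taux f 3 ≤ Taux f (2*m+3) := by
    intro m
    induction m with
    | zero => norm_num
    | succ m ih =>
      constructor
      · have e1 := Taux_odd f m
        have e2 := Taux_even f m
        have := hmono (2*m+3)
        have h24 : 2*(m+1)+2 = 2*m+4 := by ring
        rw [h24, e2, e1]
        linarith [ih.1]
      · have e1 := Taux_even f m
        have e2 : Taux f (2*m+5) = Taux f (2*m+4) - f (2*m+5) := by
          have := Taux_odd f (m+1)
          rw [show 2*(m+1)+3 = 2*m+5 from by ring, show 2*(m+1)+2 = 2*m+4 from by ring] at this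
          exact this
        have := hmono (2*m+4)
        have h25 : 2*(m+1)+3 = 2*m+5 := by ring
        rw [h25, e2, e1]
        linarith [ih.2]
  obtain ⟨m, hm⟩ : ∃ m, n = 2*m+2 ∨ n = 2*m+3 := ⟨(n-2)/2, by omega⟩
  rcases hm with rfl | rfl
  · refine ⟨?_, (key m).1⟩
    have := Taux_odd f m
    have := hpos (2*m+3)
    linarith [(key m).2]
  · refine ⟨(key m).2, ?_⟩
    have := Taux_odd f m
    have := hpos (2*m+3)
    linarith [(key m).1]

theorem local_density_bounds (p n : ℕ) (hp : p.Prime) (hn : 2 ≤ n) :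
    ((p : ℚ) ^ 2 - 1) / (3 * (p : ℚ) ^ 2) ≤
      (∑ k ∈ Finset.range (n + 1), (-1 : ℚ) ^ k * (p.choose k) * (p : ℚ) ^ (n - k)) /
        (p : ℚ) ^ n ∧
    (∑ k ∈ Finset.range (n + 1), (-1 : ℚ) ^ k * (p.choose k) * (p : ℚ) ^ (n - k)) /
        (p : ℚ) ^ n ≤ ((p : ℚ) - 1) / (2 * (p : ℚ)) ∧
    (1 : ℚ) / 4 ≤
      (∑ k ∈ Finset.range (n + 1), (-1 : ℚ) ^ k * (p.choose k) * (p : ℚ) ^ (n - k)) /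
        (p : ℚ) ^ n ∧
    (∑ k ∈ Finset.range (n + 1), (-1 : ℚ) ^ k * (p.choose k) * (p : ℚ) ^ (n - k)) /
        (p : ℚ) ^ n < 1 / 2 := by
  have hq2 : (2:ℚ) ≤ (p:ℚ) := by exact_mod_cast hp.two_le
  have hq0 : (0:ℚ) < (p:ℚ) := by linarith
  have hq0' : (p:ℚ) ≠ 0 := ne_of_gt hq0
  set f : ℕ → ℚ := fun k => (p.choose k : ℚ) / (p:ℚ)^k with hf
  -- the sum equals Taux f n
  have heq : (∑ k ∈ Finset.range (n + 1), (-1 : ℚ) ^ k * (p.choose k) * (p : ℚ) ^ (n - k)) /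
        (p : ℚ) ^ n = Taux f n := by
    rw [Taux, Finset.sum_div]
    refine Finset.sum_congr rfl fun k hk => ?_
    have hk' : k ≤ n := Nat.lt_succ_iff.mp (Finset.mem_range.mp hk)
    have hpn : (p:ℚ)^n = (p:ℚ)^(n-k) * (p:ℚ)^k := by
      rw [← pow_add]; congr 1; omega
    rw [hpn, hf]
    have h1 : (p:ℚ)^(n-k) ≠ 0 := pow_ne_zero _ hq0'
    have h2 : (p:ℚ)^k ≠ 0 := pow_ne_zero _ hq0'
    field_simp
  have hpos : ∀ k, 0 ≤ f k := fun k => by positivity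
  have hmono : ∀ k, f (k+1) ≤ f k := by
    intro k
    have hnat : p.choose (k+1) ≤ p.choose k * p := by
      calc p.choose (k+1) ≤ p.choose (k+1) * (k+1) :=
            Nat.le_mul_of_pos_right _ (by omega)
        _ = p.choose k * (p - k) := Nat.choose_succ_right_eq p k
        _ ≤ p.choose k * p := Nat.mul_le_mul_left _ (Nat.sub_le _ _)
    have hc : (p.choose (k+1) : ℚ) ≤ (p.choose k : ℚ) * p := by exact_mod_cast hnat
    rw [hf]
    rw [div_le_div_iff₀ (by positivity) (by positivity)]
    have hpk : (0:ℚ) ≤ (p:ℚ)^k := by positivity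
    rw [pow_succ]
    nlinarith
  obtain ⟨hlo, hhi⟩ := alt_bounds f hpos hmono n hn
  -- explicit values
  have h2 : (p.choose 2 : ℚ) * 2 = (p:ℚ) * ((p:ℚ) - 1) := by
    have hnat : p.choose 2 * 2 = p * (p - 1) := by
      have := Nat.choose_succ_right_eq p 1; simpa using this
    have hcast : (p.choose 2 : ℚ) * 2 = (p:ℚ) * ((p - 1 : ℕ) : ℚ) := by
      exact_mod_cast hnat
    rw [hcast, Nat.cast_sub hp.one_le]
    norm_num
  have h3 : (p.choose 3 : ℚ) * 3 = (p.choose 2 : ℚ) * ((p:ℚ) - 2) := by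
    have hnat : p.choose 3 * 3 = p.choose 2 * (p - 2) := by
      have := Nat.choose_succ_right_eq p 2; simpa using this
    have hcast : (p.choose 3 : ℚ) * 3 = (p.choose 2 : ℚ) * ((p - 2 : ℕ) : ℚ) := by
      exact_mod_cast hnat
    rw [hcast, Nat.cast_sub hp.two_le]
    norm_num
  have hc2 : (p.choose 2 : ℚ) = (p:ℚ) * ((p:ℚ) - 1) / 2 := by linarith
  have hc3 : (p.choose 3 : ℚ) = (p:ℚ) * ((p:ℚ) - 1) * ((p:ℚ) - 2) / 6 := by
    have h6 : (p.choose 3 : ℚ) * 6 = (p:ℚ) * ((p:ℚ) - 1) * ((p:ℚ) - 2) := by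
      nlinarith [h2, h3]
    linarith
  have hT2 : Taux f 2 = ((p:ℚ) - 1) / (2 * (p:ℚ)) := by
    rw [Taux]
    rw [Finset.sum_range_succ, Finset.sum_range_succ, Finset.sum_range_one]
    simp only [hf, Nat.choose_zero_right, Nat.choose_one_right]
    rw [hc2]
    field_simp
    ring
  have hT3 : Taux f 3 = ((p:ℚ)^2 - 1) / (3 * (p:ℚ)^2) := by
    have := Taux_odd f 0
    norm_num at this
    rw [this, hT2, hf]
    simp only
    rw [hc3]
    field_simp
    ring
  rw [hT3] at hlo
  rw [hT2] at hhi
  refine ⟨by rw [heq]; exact hlo, by rw [heq]; exact hhi, ?_, ?_⟩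
  · rw [heq]
    refine le_trans ?_ hlo
    rw [div_le_div_iff₀ (by norm_num) (by positivity)]
    nlinarith
  · rw [heq]
    refine lt_of_le_of_lt hhi ?_
    rw [div_lt_div_iff₀ (by positivity) (by norm_num)]
    linarith
end

section
/- Let K be a number field of degree n in which a prime p is totally ramified, so (p) = 𝔭^n with N(𝔭) = p. Suppose p = a + b with 0 < a < p, a an n-th power residue modulo p, and suppose K is norm-Euclidean. Then at least one of a and −b is the norm of an element of O_K. -/
open Polynomial NumberField

/-! Norm-Euclidean rings are principal, so `𝔭 = (π)` with `|N π| = p`. Dividing an integer `x`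
with `x ^ n ≡ a` by `π` leaves a remainder `ρ ≡ x mod 𝔭`; as `𝔭 ^ n = (p)`, multiplication by
`ρ - x` is nilpotent modulo `p`, whence `N ρ ≡ x ^ n ≡ a (mod p)`. Together with `|N ρ| < p`
this forces `N ρ = a` or `N ρ = a - p = -b`. -/

/-- A number field is norm-Euclidean if division with remainder holds with
respect to the absolute value of the field norm. -/
def NormEuclidean (K : Type*) [Field K] [NumberField K] : Prop :=
  ∀ α β : 𝓞 K, β ≠ 0 → ∃ γ ρ : 𝓞 K, α = γ * β + ρ ∧
    |Algebra.norm ℤ ρ| < |Algebra.norm ℤ β|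

theorem Matrix.det_scalar_add_of_isNilpotent {R n : Type*} [CommRing R] [IsReduced R]
    [Fintype n] [DecidableEq n] (c : R) {D : Matrix n n R} (hD : IsNilpotent D) :
    (scalar n c + D).det = c ^ Fintype.card n := by
  have hchar : (-D).charpoly = X ^ Fintype.card n := by
    rw [← sub_eq_zero]
    ext i
    exact (Polynomial.isNilpotent_iff.mp
      (isNilpotent_charpoly_sub_pow_of_isNilpotent hD.neg) i).eq_zero
  simpa [hchar] using ((-D).eval_charpoly c).symm

theorem Algebra.norm_intCast_add_eq_pow_of_dvd_pow {S : Type*} [CommRing S] [Module.Free ℤ S]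
    [Module.Finite ℤ S] {p : ℕ} [Fact p.Prime] (x : ℤ) {δ : S} {m : ℕ} (hδ : (p : S) ∣ δ ^ m) :
    (Algebra.norm ℤ (x + δ) : ZMod p) = (x : ZMod p) ^ Module.finrank ℤ S := by
  classical
  let b := Module.Free.chooseBasis ℤ S
  let g : S →+* Matrix _ _ (ZMod p) :=
    (Int.castRingHom (ZMod p)).mapMatrix.comp (Algebra.leftMulMatrix b).toRingHom
  have hg : IsNilpotent (g δ) := by
    obtain ⟨τ, hτ⟩ := hδ
    refine ⟨m, ?_⟩
    rw [← map_pow, hτ, map_mul, map_natCast, ← Matrix.diagonal_natCast, ZMod.natCast_self,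
      Matrix.diagonal_zero, zero_mul]
  have hx : g x = Matrix.scalar _ (x : ZMod p) := by
    rw [map_intCast]
    rfl
  rw [Algebra.norm_eq_matrix_det b, ← eq_intCast (Int.castRingHom (ZMod p)), RingHom.map_det]
  change (g (x + δ)).det = _
  rw [map_add, hx, Matrix.det_scalar_add_of_isNilpotent _ hg,
    Module.finrank_eq_card_chooseBasisIndex]

theorem Int.eq_or_eq_sub_of_intCast_eq {p : ℕ} {m a : ℤ} (h : (m : ZMod p) = a) (hm : |m| < p)
    (ha : 0 ≤ a) (hap : a < p) : m = a ∨ m = a - p := by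
  obtain ⟨k, hk⟩ := (ZMod.intCast_eq_intCast_iff_dvd_sub a m p).mp h.symm
  rw [abs_lt] at hm
  have hk1 : k < 1 := by nlinarith
  have hk2 : -2 < k := by nlinarith
  interval_cases k <;> omega

namespace NormEuclidean

variable {K : Type*} [Field K] [NumberField K]

open scoped Classical in
@[reducible] noncomputable def toEuclideanDomain (h : NormEuclidean K) : EuclideanDomain (𝓞 K) where
  __ := (inferInstance : CommRing (𝓞 K))
  __ := (inferInstance : Nontrivial (𝓞 K))
  quotient α β := if hβ : β = 0 then 0 else (h α β hβ).choose
  quotient_zero α := dif_pos rfl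
  remainder α β := if hβ : β = 0 then α else (h α β hβ).choose_spec.choose
  quotient_mul_add_remainder_eq α β := by
    by_cases hβ : β = 0
    · simp [hβ]
    · simp only [dif_neg hβ]
      rw [mul_comm, ← (h α β hβ).choose_spec.choose_spec.1]
  r := InvImage (· < ·) fun α => (Algebra.norm ℤ α).natAbs
  r_wellFounded := (measure _).wf
  remainder_lt α β hβ := by
    have hlt := (h α β hβ).choose_spec.choose_spec.2
    simpa only [dif_neg hβ, InvImage, ← Int.natCast_natAbs, Nat.cast_lt] using hlt
  mul_left_not_lt α β hβ := by
    have hβ' : (Algebra.norm ℤ β).natAbs ≠ 0 :=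
      Int.natAbs_ne_zero.mpr (Algebra.norm_ne_zero_iff.mpr hβ)
    simp only [InvImage, map_mul, Int.natAbs_mul, not_lt]
    exact Nat.le_mul_of_pos_right _ (Nat.pos_of_ne_zero hβ')

theorem isPrincipalIdealRing (h : NormEuclidean K) : IsPrincipalIdealRing (𝓞 K) :=
  @EuclideanDomain.to_principal_ideal_domain _ h.toEuclideanDomain

end NormEuclidean

theorem heilbronn_criterion_general (K : Type*) [Field K] [NumberField K]
    (n : ℕ) (hn : n = Module.finrank ℚ K)
    (p : ℕ) (hp : p.Prime) (𝔭 : Ideal (𝓞 K))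
    (hram : Ideal.span {(p : 𝓞 K)} = 𝔭 ^ n) (hnorm : Ideal.absNorm 𝔭 = p)
    (a b : ℤ) (hab : (p : ℤ) = a + b) (ha0 : 0 < a) (hap : a < (p : ℤ))
    (hres : ∃ x : ℤ, ((x : ZMod p)) ^ n = (a : ZMod p))
    (heuc : NormEuclidean K) :
    (∃ α : 𝓞 K, Algebra.norm ℤ α = a) ∨ (∃ α : 𝓞 K, Algebra.norm ℤ α = -b) := by
  have : Fact p.Prime := ⟨hp⟩
  obtain ⟨x, hx⟩ := hres
  obtain ⟨π, rfl⟩ := (heuc.isPrincipalIdealRing.principal 𝔭).principal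
  have hπ : (Algebra.norm ℤ π).natAbs = p := by rw [← Ideal.absNorm_span_singleton, hnorm]
  have hπ0 : π ≠ 0 := by
    rintro rfl
    simp [eq_comm, hp.ne_zero] at hπ
  obtain ⟨γ, ρ, hdiv, hlt⟩ := heuc x π hπ0
  have hpow : (p : 𝓞 K) ∣ (-(γ * π)) ^ n := by
    rw [← Ideal.mem_span_singleton, hram]
    exact Ideal.pow_mem_pow (neg_mem (Ideal.mul_mem_left _ _ (Ideal.mem_span_singleton_self π))) n
  have hcong : (Algebra.norm ℤ ρ : ZMod p) = a := by
    rw [show ρ = x + -(γ * π) by rw [hdiv]; ring, Algebra.norm_intCast_add_eq_pow_of_dvd_pow x hpow,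
      RingOfIntegers.rank, ← hn, hx]
  have habs : |Algebra.norm ℤ ρ| < p := by rwa [Int.abs_eq_natAbs (Algebra.norm ℤ π), hπ] at hlt
  rcases Int.eq_or_eq_sub_of_intCast_eq hcong habs ha0.le hap with h | h
  · exact Or.inl ⟨ρ, h⟩
  · exact Or.inr ⟨ρ, by omega⟩

theorem heilbronn_criterion (K : Type*) [Field K] [NumberField K]
    (n : ℕ) (hn : n = Module.finrank ℚ K)
    (p : ℕ) (hp : p.Prime) (𝔭 : Ideal (𝓞 K)) (h𝔭 : 𝔭.IsPrime)
    (hram : Ideal.span {(p : 𝓞 K)} = 𝔭 ^ n) (hnorm : Ideal.absNorm 𝔭 = p)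
    (a b : ℤ) (hab : (p : ℤ) = a + b) (ha0 : 0 < a) (hap : a < (p : ℤ))
    (hres : ∃ x : ℤ, ((x : ZMod p)) ^ n = (a : ZMod p))
    (heuc : NormEuclidean K) :
    (∃ α : 𝓞 K, Algebra.norm ℤ α = a) ∨ (∃ α : 𝓞 K, Algebra.norm ℤ α = -b) :=
  heilbronn_criterion_general K n hn p hp 𝔭 hram hnorm a b hab ha0 hap hres heuc
end

section
/- For the prime 5 and any integer n ≥ 2, the proportion C_5(n) of monic degree-n polynomials over 𝔽_5 with no root in 𝔽_5 satisfies C_5(n) ≥ 8/25, and similarly C_3(n) ≥ 8/27 and C_2(n) ≥ 1/4. -/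
/-!
Dividing by `q ^ n` turns `A_q(n)` into the truncated binomial sum `∑_{k ≤ n} C(q,k) (-1/q)^k`.
Once `n ≥ q` the truncation is invisible and the sum is `(1 - 1/q) ^ q`, which is
`1/4`, `8/27`, `1024/3125 ≥ 8/25` for `q = 2, 3, 5`; the finitely many `2 ≤ n < q` are computed.
-/

open Finset

lemma sum_range_neg_one_pow_mul_choose_mul_pow_div_pow {K : Type*} [Field K] {x : K} (hx : x ≠ 0)
    (m n : ℕ) :
    (∑ k ∈ range (n + 1), (-1 : K) ^ k * m.choose k * x ^ (n - k)) / x ^ n =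
      ∑ k ∈ range (n + 1), (m.choose k : K) * (-x⁻¹) ^ k := by
  rw [sum_div]
  refine sum_congr rfl fun k hk => ?_
  rw [pow_sub₀ x hx (Nat.lt_succ_iff.mp (mem_range.mp hk)), neg_pow x⁻¹, inv_pow]
  field_simp

lemma sum_range_choose_mul_pow_of_le {R : Type*} [CommSemiring R] (y : R) {m n : ℕ}
    (hmn : m ≤ n) : ∑ k ∈ range (n + 1), (m.choose k : R) * y ^ k = (1 + y) ^ m := by
  rw [add_comm 1 y, add_pow]
  refine (sum_subset (range_subset_range.mpr (Nat.succ_le_succ hmn)) fun k _ hk => ?_).symm.trans ?_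
  · rw [Nat.choose_eq_zero_of_lt (by simpa using hk), Nat.cast_zero, zero_mul]
  · simp only [one_pow, mul_one, mul_comm]

theorem local_density_small_primes (n : ℕ) (hn : 2 ≤ n) :
    (8 : ℚ) / 25 ≤
      (∑ k ∈ Finset.range (n + 1), (-1 : ℚ) ^ k * (Nat.choose 5 k) * (5 : ℚ) ^ (n - k)) /
        (5 : ℚ) ^ n ∧
    (8 : ℚ) / 27 ≤
      (∑ k ∈ Finset.range (n + 1), (-1 : ℚ) ^ k * (Nat.choose 3 k) * (3 : ℚ) ^ (n - k)) /
        (3 : ℚ) ^ n ∧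
    (1 : ℚ) / 4 ≤
      (∑ k ∈ Finset.range (n + 1), (-1 : ℚ) ^ k * (Nat.choose 2 k) * (2 : ℚ) ^ (n - k)) /
        (2 : ℚ) ^ n := by
  simp only [sum_range_neg_one_pow_mul_choose_mul_pow_div_pow (by norm_num : (5 : ℚ) ≠ 0),
    sum_range_neg_one_pow_mul_choose_mul_pow_div_pow (by norm_num : (3 : ℚ) ≠ 0),
    sum_range_neg_one_pow_mul_choose_mul_pow_div_pow (by norm_num : (2 : ℚ) ≠ 0)]
  refine ⟨?_, ?_, ?_⟩
  · rcases lt_or_ge n 5 with hn5 | hn5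
    · interval_cases n <;> norm_num [sum_range_succ, Nat.choose]
    · rw [sum_range_choose_mul_pow_of_le _ hn5]; norm_num
  · rcases lt_or_ge n 3 with hn3 | hn3
    · interval_cases n; norm_num [sum_range_succ, Nat.choose]
    · rw [sum_range_choose_mul_pow_of_le _ hn3]; norm_num
  · rw [sum_range_choose_mul_pow_of_le _ hn]; norm_num
end
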